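/- A finite connected non-complete simple graph G of order n satisfies mobmv(G) = n − 1 if and only if G contains two adjacent hubs. -/

import Mathlib

open SimpleGraph

variable {V : Type*} {W : Type*}

/-- `S` is a general position set of `G`: no shortest path of `G` contains more than two
vertices of `S`. -/
def IsGenPosSet (G : SimpleGraph V) (S : Set V) : Prop :=
  ∀ ⦃u v : V⦄ (p : G.Walk u v), p.IsPath → p.length = G.dist u v →
    (S ∩ {x | x ∈ p.support}).ncard ≤ 2

/-- `S` is a mutual visibility set of `G`: any two vertices of `S` are joined by a shortest
path containing no further vertex of `S`. -/
def IsMutVisSet (G : SimpleGraph V) (S : Set V) : Prop :=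
  ∀ ⦃u⦄, u ∈ S → ∀ ⦃v⦄, v ∈ S → ∃ p : G.Walk u v,
    p.IsPath ∧ p.length = G.dist u v ∧ ∀ x ∈ p.support, x ∈ S → x = u ∨ x = v

/-- A legal move (with respect to the position property `P`) of a configuration of `t` robots
on distinct vertices: one robot moves to an adjacent unoccupied vertex, and the resulting set
of occupied vertices again satisfies `P`. -/
def LegalMove (G : SimpleGraph V) (P : Set V → Prop) {t : ℕ} (f g : Fin t ↪ V) : Prop :=
  ∃ i : Fin t, G.Adj (f i) (g i) ∧ g i ∉ Set.range ⇑f ∧ (∀ j, j ≠ i → g j = f j) ∧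
    P (Set.range ⇑g)

/-- A configuration is a mobile `P`-configuration if it satisfies `P` and there is a sequence
of legal moves starting from it such that every vertex is visited by some robot. -/
def IsMobileConfig (G : SimpleGraph V) (P : Set V → Prop) {t : ℕ} (f : Fin t ↪ V) : Prop :=
  P (Set.range ⇑f) ∧ ∃ (N : ℕ) (c : ℕ → (Fin t ↪ V)), c 0 = f ∧
    (∀ k < N, LegalMove G P (c k) (c (k + 1))) ∧ ∀ v : V, ∃ k ≤ N, ∃ i, c k i = v

/-- A configuration is completely mobile if it is mobile and moreover every robot can visit
every vertex via a sequence of legal moves. -/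
def IsCompletelyMobileConfig (G : SimpleGraph V) (P : Set V → Prop) {t : ℕ}
    (f : Fin t ↪ V) : Prop :=
  IsMobileConfig G P f ∧ ∀ (v : V) (i : Fin t), ∃ (N : ℕ) (c : ℕ → (Fin t ↪ V)), c 0 = f ∧
    (∀ k < N, LegalMove G P (c k) (c (k + 1))) ∧ ∃ k ≤ N, c k i = v

/-- The mobile general position number `mob(G)`. -/
noncomputable def mobGP (G : SimpleGraph V) : ℕ :=
  sSup {t : ℕ | ∃ f : Fin t ↪ V, IsMobileConfig G (IsGenPosSet G) f}

/-- The completely mobile general position number `mob*(G)`. -/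
noncomputable def cmobGP (G : SimpleGraph V) : ℕ :=
  sSup {t : ℕ | ∃ f : Fin t ↪ V, IsCompletelyMobileConfig G (IsGenPosSet G) f}

/-- The mobile mutual visibility number `mobmv(G)`. -/
noncomputable def mobMV (G : SimpleGraph V) : ℕ :=
  sSup {t : ℕ | ∃ f : Fin t ↪ V, IsMobileConfig G (IsMutVisSet G) f}

/-- The completely mobile mutual visibility number `mobmv*(G)`. -/
noncomputable def cmobMV (G : SimpleGraph V) : ℕ :=
  sSup {t : ℕ | ∃ f : Fin t ↪ V, IsCompletelyMobileConfig G (IsMutVisSet G) f}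

/-- The mutual visibility number `μ(G)`. -/
noncomputable def muMV (G : SimpleGraph V) : ℕ :=
  sSup {n : ℕ | ∃ S : Set V, IsMutVisSet G S ∧ S.ncard = n}

/-- `μ₂(G)`: the largest cardinality of a mutual visibility set whose vertices are pairwise at
distance at most `2`. -/
noncomputable def muMV2 (G : SimpleGraph V) : ℕ :=
  sSup {n : ℕ | ∃ S : Set V, IsMutVisSet G S ∧ (∀ u ∈ S, ∀ v ∈ S, G.dist u v ≤ 2) ∧
    S.ncard = n}

/-- The join `G ∨ H` of two graphs: the disjoint union together with all edges between the
two vertex sets. -/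
def graphJoin (G : SimpleGraph V) (H : SimpleGraph W) : SimpleGraph (V ⊕ W) where
  Adj x y := match x, y with
    | Sum.inl a, Sum.inl b => G.Adj a b
    | Sum.inr a, Sum.inr b => H.Adj a b
    | Sum.inl _, Sum.inr _ => True
    | Sum.inr _, Sum.inl _ => True
  symm := by refine ⟨?_⟩; rintro (a | a) (b | b) h <;> simp_all <;> exact h.symm
  loopless := by refine ⟨?_⟩; rintro (a | a) h <;> simp_all

/-- The strong product `G ⊠ H` of two graphs. -/
def strongProd (G : SimpleGraph V) (H : SimpleGraph W) : SimpleGraph (V × W) where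
  Adj x y := (x.1 = y.1 ∧ H.Adj x.2 y.2) ∨ (x.2 = y.2 ∧ G.Adj x.1 y.1) ∨
    (G.Adj x.1 y.1 ∧ H.Adj x.2 y.2)
  symm := by
    refine ⟨?_⟩
    rintro ⟨a, b⟩ ⟨c, d⟩ (⟨h1, h2⟩ | ⟨h1, h2⟩ | ⟨h1, h2⟩)
    · exact Or.inl ⟨h1.symm, h2.symm⟩
    · exact Or.inr (Or.inl ⟨h1.symm, h2.symm⟩)
    · exact Or.inr (Or.inr ⟨h1.symm, h2.symm⟩)
  loopless := by refine ⟨?_⟩; rintro ⟨a, b⟩ (⟨_, h⟩ | ⟨_, h⟩ | ⟨h, _⟩) <;> simp_all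

/-- A vertex `u` is a hub if any two distinct non-adjacent vertices different from `u` are
both adjacent to `u`. -/
def IsHub (G : SimpleGraph V) (u : V) : Prop :=
  ∀ ⦃w₁ w₂ : V⦄, w₁ ≠ u → w₂ ≠ u → w₁ ≠ w₂ → ¬G.Adj w₁ w₂ → G.Adj w₁ u ∧ G.Adj w₂ u

/-- A block graph: every block is complete; equivalently, the vertices of any cycle form a
clique. -/
def IsBlockGraph (G : SimpleGraph V) : Prop :=
  ∀ (v : V) (c : G.Walk v v), c.IsCycle → G.IsClique {x | x ∈ c.support}

/-- The graph obtained from the complete graph `K n` (on vertices `1, ..., n`) by attaching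
one pendant vertex `0`, adjacent only to vertex `1`. -/
def cliqueWithLeaf (n : ℕ) : SimpleGraph (Fin (n + 1)) :=
  SimpleGraph.fromRel (fun i j => (i ≠ 0 ∧ j ≠ 0) ∨ (i = 0 ∧ j = 1))

/-- `G` is (isomorphic to) a path graph. -/
def IsPathGraph (G : SimpleGraph V) : Prop :=
  ∃ n : ℕ, Nonempty (G ≃g pathGraph n)

/-!
If `S` is a mutual visibility set and `x, y ∈ S` are distinct and non-adjacent, the first inner
vertex of a shortest `x,y`-path avoiding `S` is a neighbour of `x` outside `S`. Hence the
complement of a vertex `u` is a mutual visibility set exactly when `u` is a hub, and in a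
non-complete graph no mutual visibility set contains all vertices. So `n - 1` robots occupy all
vertices but one, say `u`, and `u` is a hub; the first move (there must be one, since `u` has to
be visited) brings a robot from a neighbour `v` of `u` onto `u`, after which `v` is the free
vertex, so `v` is a hub too. Conversely, for adjacent hubs `u, v` the single move from `v` to `u`
turns the configuration on `V - u` into the one on `V - v`, and together they visit every vertex.
-/

theorem Nat.sSup_eq_iff_mem {s : Set ℕ} {m : ℕ} (hm : m ≠ 0) (hs : ∀ t ∈ s, t ≤ m) :
    sSup s = m ↔ m ∈ s := by
  refine ⟨fun h => ?_, fun h => IsGreatest.csSup_eq ⟨h, hs⟩⟩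
  obtain rfl | hne := s.eq_empty_or_nonempty
  · simp only [csSup_empty, bot_eq_zero] at h
    exact absurd h.symm hm
  · exact h ▸ Nat.sSup_mem hne ⟨m, hs⟩

section MutualVisibility

variable {G : SimpleGraph V}

theorem IsMutVisSet.exists_adj_notMem {S : Set V} (hS : IsMutVisSet G S) {x y : V}
    (hx : x ∈ S) (hy : y ∈ S) (hxy : x ≠ y) (hnadj : ¬G.Adj x y) : ∃ a ∉ S, G.Adj x a := by
  obtain ⟨p, -, -, hp⟩ := hS hx hy
  cases p with
  | nil => exact absurd rfl hxy
  | @cons _ a _ hxa q =>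
    refine ⟨a, fun haS => ?_, hxa⟩
    rcases hp a (by simp) haS with rfl | rfl
    · exact hxa.ne rfl
    · exact hnadj hxa

theorem IsMutVisSet.ne_univ {S : Set V} (hS : IsMutVisSet G S) (hG : G ≠ ⊤) :
    S ≠ Set.univ := by
  rintro rfl
  obtain ⟨x, y, hxy, hnadj⟩ := ne_top_iff_exists_not_adj.mp hG
  obtain ⟨a, ha, -⟩ := hS.exists_adj_notMem (Set.mem_univ x) (Set.mem_univ y) hxy hnadj
  exact ha (Set.mem_univ a)

theorem isMutVisSet_compl_singleton_iff {u : V} : IsMutVisSet G {u}ᶜ ↔ IsHub G u := by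
  constructor
  · intro hS x y hx hy hxy hnadj
    obtain ⟨a, ha, hxa⟩ := hS.exists_adj_notMem hx hy hxy hnadj
    obtain ⟨b, hb, hyb⟩ := hS.exists_adj_notMem hy hx hxy.symm fun h => hnadj h.symm
    rw [Set.notMem_compl_iff, Set.mem_singleton_iff] at ha hb
    exact ⟨ha ▸ hxa, hb ▸ hyb⟩
  · intro hu x hx y hy
    by_cases hxy : x = y
    · subst hxy
      exact ⟨Walk.nil, Walk.IsPath.nil, by simp, by simp⟩
    by_cases hadj : G.Adj x y
    · refine ⟨Walk.cons hadj Walk.nil, by simp [hxy], ?_, by simp⟩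
      simp [dist_eq_one_iff_adj.mpr hadj]
    obtain ⟨hxu, hyu⟩ := hu hx hy hxy hadj
    let p : G.Walk x y := Walk.cons hxu (Walk.cons hyu.symm Walk.nil)
    have hdist : G.dist x y = 2 := by
      have h0 := p.reachable.pos_dist_of_ne hxy
      have h1 : G.dist x y ≠ 1 := mt dist_eq_one_iff_adj.mp hadj
      have h2 : G.dist x y ≤ 2 := dist_le p
      omega
    refine ⟨p, ?_, by simp [p, hdist], ?_⟩
    · simp [p, hxy, Ne.symm (Set.mem_compl_singleton_iff.mp hy),
        Set.mem_compl_singleton_iff.mp hx]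
    · intro z hz hzS
      simp only [p, Walk.support_cons, Walk.support_nil, List.mem_cons, List.not_mem_nil,
        or_false] at hz
      rcases hz with rfl | rfl | rfl
      exacts [Or.inl rfl, absurd rfl hzS, Or.inr rfl]

end MutualVisibility

section Configurations

variable {G : SimpleGraph V} {P : Set V → Prop} {t : ℕ}

theorem LegalMove.exists_range_eq_compl_singleton {f g : Fin t ↪ V} (h : LegalMove G P f g)
    {u : V} (hf : Set.range f = {u}ᶜ) : ∃ v, G.Adj v u ∧ Set.range g = {v}ᶜ := by
  obtain ⟨i, hadj, hgf, hfix, -⟩ := h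
  have hgi : g i = u := by simpa [hf] using hgf
  refine ⟨f i, hgi ▸ hadj, Set.ext fun x => ⟨?_, fun hx => ?_⟩⟩
  · rintro ⟨j, rfl⟩
    by_cases hji : j = i
    · subst hji
      exact hadj.ne.symm
    · rw [hfix j hji]
      exact fun h => hji (f.injective h)
  · by_cases hxu : x = u
    · exact ⟨i, hgi.trans hxu.symm⟩
    · obtain ⟨j, rfl⟩ : x ∈ Set.range f := hf ▸ hxu
      exact ⟨j, hfix j fun hji => hx (hji ▸ rfl)⟩

theorem IsMobileConfig.exists_legalMove {f : Fin t ↪ V} (hf : IsMobileConfig G P f)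
    (hne : Set.range f ≠ Set.univ) : ∃ g, LegalMove G P f g := by
  obtain ⟨-, N, c, rfl, hmoves, hvisit⟩ := hf
  obtain ⟨v, hv⟩ := (Set.ne_univ_iff_exists_notMem _).mp hne
  obtain ⟨k, hk, i, rfl⟩ := hvisit v
  have hN : 0 < N := by
    by_contra! hN
    obtain rfl : k = 0 := by omega
    exact hv ⟨i, rfl⟩
  exact ⟨c 1, hmoves 0 hN⟩

theorem legalMove_swap [DecidableEq V] (f : Fin t ↪ V) {i : Fin t} {u : V} (hu : u ∉ Set.range f)
    (hadj : G.Adj (f i) u) (hP : P (Set.range (f.trans (Equiv.swap (f i) u).toEmbedding))) :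
    LegalMove G P f (f.trans (Equiv.swap (f i) u).toEmbedding) := by
  refine ⟨i, by simpa using hadj, by simpa using hu, fun j hji => ?_, hP⟩
  have hfj : f j ≠ f i := fun h => hji (f.injective h)
  have hfu : f j ≠ u := fun h => hu ⟨j, h⟩
  simp [Equiv.swap_apply_of_ne_of_ne hfj hfu]

theorem isMobileConfig_of_legalMove {f g : Fin t ↪ V} (hf : P (Set.range f))
    (h : LegalMove G P f g) (hcover : Set.range f ∪ Set.range g = Set.univ) :
    IsMobileConfig G P f := by
  refine ⟨hf, 1, fun k => if k = 0 then f else g, rfl, fun k hk => ?_, fun v => ?_⟩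
  · obtain rfl : k = 0 := by omega
    simpa using h
  · rcases (Set.ext_iff.mp hcover v).mpr trivial with ⟨i, hi⟩ | ⟨i, hi⟩
    exacts [⟨0, zero_le_one, i, hi⟩, ⟨1, le_rfl, i, hi⟩]

variable [Fintype V]

theorem exists_range_eq_compl_singleton (f : Fin t ↪ V) (ht : t + 1 = Fintype.card V) :
    ∃ u, Set.range f = {u}ᶜ := by
  have hcard := Set.ncard_add_ncard_compl (Set.range f)
  rw [Set.ncard_range_of_injective f.injective, Nat.card_eq_fintype_card,
    Nat.card_eq_fintype_card, Fintype.card_fin] at hcard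
  obtain ⟨u, hu⟩ := Set.ncard_eq_one.mp (show (Set.range f)ᶜ.ncard = 1 by omega)
  exact ⟨u, (compl_eq_comm.mp hu).symm⟩

theorem exists_embedding_range_eq_compl_singleton (u : V) :
    ∃ f : Fin (Fintype.card V - 1) ↪ V, Set.range f = {u}ᶜ := by
  classical
  let e := Fintype.equivFinOfCardEq (α := ({u}ᶜ : Set V)) (n := Fintype.card V - 1)
    (by rw [Fintype.card_compl_set, Set.card_singleton])
  refine ⟨e.symm.toEmbedding.trans (Function.Embedding.subtype _), ?_⟩
  rw [Function.Embedding.coe_trans, Set.range_comp, Equiv.coe_toEmbedding, Equiv.range_eq_univ,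
    Set.image_univ, Function.Embedding.coe_subtype, Subtype.range_coe]

end Configurations

section MobileMutualVisibility

variable [Fintype V] {G : SimpleGraph V}

theorem lt_card_of_isMutVisSet_range (hG : G ≠ ⊤) {t : ℕ} {f : Fin t ↪ V}
    (hf : IsMutVisSet G (Set.range f)) : t < Fintype.card V := by
  simpa using Fintype.card_lt_of_injective_not_surjective f f.injective
    (mt Set.range_eq_univ.mpr (hf.ne_univ hG))

theorem IsMobileConfig.exists_adj_isHub {f : Fin (Fintype.card V - 1) ↪ V}
    (hf : IsMobileConfig G (IsMutVisSet G) f) (hV : 0 < Fintype.card V) :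
    ∃ u v, G.Adj u v ∧ IsHub G u ∧ IsHub G v := by
  obtain ⟨u, hu⟩ := exists_range_eq_compl_singleton f (by omega)
  obtain ⟨g, hg⟩ := hf.exists_legalMove (by simp [hu])
  obtain ⟨v, hvu, hv⟩ := hg.exists_range_eq_compl_singleton hu
  obtain ⟨-, -, -, -, hgS⟩ := hg
  exact ⟨u, v, hvu.symm, isMutVisSet_compl_singleton_iff.mp (hu ▸ hf.1),
    isMutVisSet_compl_singleton_iff.mp (hv ▸ hgS)⟩

theorem exists_isMobileConfig_of_adj_isHub {u v : V} (huv : G.Adj u v) (hu : IsHub G u)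
    (hv : IsHub G v) : ∃ f : Fin (Fintype.card V - 1) ↪ V, IsMobileConfig G (IsMutVisSet G) f := by
  classical
  obtain ⟨f, hf⟩ := exists_embedding_range_eq_compl_singleton u
  obtain ⟨i, rfl⟩ : v ∈ Set.range f := hf ▸ huv.ne'
  have hg : Set.range (f.trans (Equiv.swap (f i) u).toEmbedding) = {f i}ᶜ := by
    rw [Function.Embedding.coe_trans, Set.range_comp, hf]
    simp [Equiv.image_compl]
  refine ⟨f, isMobileConfig_of_legalMove (hf ▸ isMutVisSet_compl_singleton_iff.mpr hu)
    (legalMove_swap f (by simp [hf]) huv.symm (hg ▸ isMutVisSet_compl_singleton_iff.mpr hv)) ?_⟩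
  rw [hf, hg, ← Set.compl_inter, Set.singleton_inter_eq_empty.mpr (by simpa using huv.ne),
    Set.compl_empty]

end MobileMutualVisibility

theorem stmt_4_general {V : Type*} [Fintype V] (G : SimpleGraph V)
    (hnc : G ≠ ⊤) :
    mobMV G = Fintype.card V - 1 ↔ ∃ u v : V, G.Adj u v ∧ IsHub G u ∧ IsHub G v := by
  obtain ⟨x, y, hxy, -⟩ := ne_top_iff_exists_not_adj.mp hnc
  have hV : 1 < Fintype.card V := Fintype.one_lt_card_iff.mpr ⟨x, y, hxy⟩
  have hbound : ∀ t ∈ {t | ∃ f : Fin t ↪ V, IsMobileConfig G (IsMutVisSet G) f},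
      t ≤ Fintype.card V - 1 := by
    rintro t ⟨f, hf⟩
    exact Order.le_sub_one_of_lt (lt_card_of_isMutVisSet_range hnc hf.1)
  rw [mobMV, Nat.sSup_eq_iff_mem (by omega) hbound]
  exact ⟨fun ⟨f, hf⟩ => hf.exists_adj_isHub (by omega),
    fun ⟨u, v, huv, hu, hv⟩ => exists_isMobileConfig_of_adj_isHub huv hu hv⟩

theorem stmt_4 {V : Type*} [Fintype V] (G : SimpleGraph V) (hconn : G.Connected)
    (hnc : G ≠ ⊤) :
    mobMV G = Fintype.card V - 1 ↔ ∃ u v : V, G.Adj u v ∧ IsHub G u ∧ IsHub G v :=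
  stmt_4_general G hnc
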